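/- arXiv:2603.08888 — 3 statements merged into one kernel-verified Lean document; each statement's English description precedes it below -/
import Mathlib

section
/- Let a<b and T>0 be real numbers, and let ρ,σ:[a,b]→ℝ be continuous with ρ(x)>0 for all x. Let u,v:ℝ²→ℂ be twice continuously differentiable functions such that ρ(x)∂ₜ²u(t,x)+σ(x)∂ₜu(t,x)−∂ₓ²u(t,x)=0 and ρ(x)∂ₜ²v(t,x)+σ(x)∂ₜv(t,x)−∂ₓ²v(t,x)=0 for all (t,x)∈[0,2T]×[a,b], and such that u(0,x)=∂ₜu(0,x)=v(0,x)=∂ₜv(0,x)=0 for all x∈[a,b]. Then ∫ₐᵇ(ρ(x)·∂ₜu(T,x)·∂ₜv(T,x)−∂ₓu(T,x)·∂ₓv(T,x))dx = ∫₀ᵀ([∂ₓu(τ,b)·∂ₜv(2T−τ,b)−∂ₜu(τ,b)·∂ₓv(2T−τ,b)]−[∂ₓu(τ,a)·∂ₜv(2T−τ,a)−∂ₜu(τ,a)·∂ₓv(2T−τ,a)])dτ. -/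
/-!
The cross energy `E τ x = ρ ∂ₜu(τ) ∂ₜv(2T - τ) - ∂ₓu(τ) ∂ₓv(2T - τ)` satisfies, for `τ ∈ [0, T]`,
the conservation law `∂_τ E = ∂ₓ G` with flux `G τ x = ∂ₓu(τ) ∂ₜv(2T - τ) - ∂ₜu(τ) ∂ₓv(2T - τ)`:
after substituting the two wave equations the damping terms `σ ∂ₜu ∂ₜv` cancel, and the mixed
derivatives cancel by the symmetry of second derivatives. Integrating this law over
`[0, T] × [a, b]` (Fubini plus the fundamental theorem of calculus in each variable) gives
`∫ (E T - E 0) = ∫₀ᵀ (G · b - G · a)`, and `E 0` vanishes by the initial conditions on `u`.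
-/

open MeasureTheory intervalIntegral

/-- Partial derivative in the first (time) variable. -/
noncomputable def dt (f : ℝ → ℝ → ℂ) (t x : ℝ) : ℂ := deriv (fun τ => f τ x) t

/-- Partial derivative in the second (space) variable. -/
noncomputable def dx (f : ℝ → ℝ → ℂ) (t x : ℝ) : ℂ := deriv (fun y => f t y) x

/-- Second partial derivative in time. -/
noncomputable def dtt (f : ℝ → ℝ → ℂ) (t x : ℝ) : ℂ := deriv (fun τ => dt f τ x) t

/-- Second partial derivative in space. -/
noncomputable def dxx (f : ℝ → ℝ → ℂ) (t x : ℝ) : ℂ := deriv (fun y => dx f t y) x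

open Function Set
open scoped Interval

section Calculus

variable {F : Type*} [NormedAddCommGroup F] [NormedSpace ℝ F]

theorem deriv_eq_zero_of_eqOn_Icc {f : ℝ → F} {a b x : ℝ} (hab : a < b) (hf : EqOn f 0 (Icc a b))
    (hx : x ∈ Icc a b) (hfx : DifferentiableAt ℝ f x) : deriv f x = 0 :=
  (uniqueDiffOn_Icc hab x hx).eq_deriv _ hfx.hasDerivAt.hasDerivWithinAt
    ((hasDerivWithinAt_const x _ 0).congr hf (hf hx))

theorem integral_sub_eq_integral_sub_of_hasDerivAt [CompleteSpace F] {E G D : ℝ → ℝ → F}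
    {t₀ t₁ a b : ℝ}
    (hE : ∀ t ∈ [[t₀, t₁]], ∀ x ∈ [[a, b]], HasDerivAt (fun s => E s x) (D t x) t)
    (hG : ∀ t ∈ [[t₀, t₁]], ∀ x ∈ [[a, b]], HasDerivAt (G t) (D t x) x)
    (hD : ContinuousOn (uncurry D) ([[t₀, t₁]] ×ˢ [[a, b]])) :
    ∫ x in a..b, (E t₁ x - E t₀ x) = ∫ t in t₀..t₁, (G t b - G t a) := by
  have hDt : ∀ x ∈ [[a, b]], IntervalIntegrable (fun t => D t x) volume t₀ t₁ := fun x hx =>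
    (hD.comp (Continuous.prodMk_left x).continuousOn fun t ht => ⟨ht, hx⟩).intervalIntegrable
  have hDx : ∀ t ∈ [[t₀, t₁]], IntervalIntegrable (D t) volume a b := fun t ht =>
    (hD.comp (Continuous.prodMk_right t).continuousOn fun x hx => ⟨ht, hx⟩).intervalIntegrable
  have hD_int : IntegrableOn (uncurry D) (Ι t₀ t₁ ×ˢ Ι a b) :=
    (hD.integrableOn_compact (isCompact_uIcc.prod isCompact_uIcc)).mono_set
      (prod_mono uIoc_subset_uIcc uIoc_subset_uIcc)
  calc ∫ x in a..b, (E t₁ x - E t₀ x)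
      = ∫ x in a..b, ∫ t in t₀..t₁, D t x := integral_congr fun x hx =>
        (integral_eq_sub_of_hasDerivAt (fun t ht => hE t ht x hx) (hDt x hx)).symm
    _ = ∫ t in t₀..t₁, ∫ x in a..b, D t x := (intervalIntegral_intervalIntegral_swap hD_int).symm
    _ = ∫ t in t₀..t₁, (G t b - G t a) := integral_congr fun t ht =>
        integral_eq_sub_of_hasDerivAt (hG t ht) (hDx t ht)

end Calculus

section PartialDerivatives

variable {w : ℝ → ℝ → ℂ} {t x : ℝ}

theorem dt_dt (w : ℝ → ℝ → ℂ) : dt (dt w) = dtt w := rfl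

theorem hasDerivAt_dt (hw : DifferentiableAt ℝ (uncurry w) (t, x)) :
    HasDerivAt (fun τ => w τ x) (dt w t x) t :=
  (hw.comp (g := uncurry w) t
    ((hasDerivAt_id' t).prodMk (hasDerivAt_const t x)).differentiableAt).hasDerivAt

theorem hasDerivAt_dx (hw : DifferentiableAt ℝ (uncurry w) (t, x)) :
    HasDerivAt (w t) (dx w t x) x :=
  (hw.comp x ((hasDerivAt_const x t).prodMk (hasDerivAt_id' x)).differentiableAt).hasDerivAt

theorem dt_eq_fderiv (hw : DifferentiableAt ℝ (uncurry w) (t, x)) :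
    dt w t x = fderiv ℝ (uncurry w) (t, x) (1, 0) :=
  (hw.hasFDerivAt.comp_hasDerivAt (l := uncurry w) t
    ((hasDerivAt_id' t).prodMk (hasDerivAt_const t x))).deriv

theorem dx_eq_fderiv (hw : DifferentiableAt ℝ (uncurry w) (t, x)) :
    dx w t x = fderiv ℝ (uncurry w) (t, x) (0, 1) :=
  (hw.hasFDerivAt.comp_hasDerivAt x ((hasDerivAt_const x t).prodMk (hasDerivAt_id' x))).deriv

theorem uncurry_dt (hw : Differentiable ℝ (uncurry w)) :
    uncurry (dt w) = fun p => fderiv ℝ (uncurry w) p (1, 0) :=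
  funext fun p => dt_eq_fderiv (hw p)

theorem uncurry_dx (hw : Differentiable ℝ (uncurry w)) :
    uncurry (dx w) = fun p => fderiv ℝ (uncurry w) p (0, 1) :=
  funext fun p => dx_eq_fderiv (hw p)

theorem contDiff_dt {m n : WithTop ℕ∞} (hw : ContDiff ℝ n (uncurry w)) (hmn : m + 1 ≤ n) :
    ContDiff ℝ m (uncurry (dt w)) := by
  rw [uncurry_dt (hw.of_le (le_add_self.trans hmn)).differentiable_one]
  exact (hw.fderiv_right hmn).clm_apply contDiff_const

theorem contDiff_dx {m n : WithTop ℕ∞} (hw : ContDiff ℝ n (uncurry w)) (hmn : m + 1 ≤ n) :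
    ContDiff ℝ m (uncurry (dx w)) := by
  rw [uncurry_dx (hw.of_le (le_add_self.trans hmn)).differentiable_one]
  exact (hw.fderiv_right hmn).clm_apply contDiff_const

theorem dt_dx_comm (hw : ContDiff ℝ 2 (uncurry w)) (t x : ℝ) : dt (dx w) t x = dx (dt w) t x := by
  have hw₁ : Differentiable ℝ (uncurry w) := hw.differentiable two_ne_zero
  have hfd : Differentiable ℝ (fderiv ℝ (uncurry w)) :=
    (hw.fderiv_right one_add_one_eq_two.le).differentiable_one
  have hsymm : IsSymmSndFDerivAt ℝ (uncurry w) (t, x) :=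
    hw.contDiffAt.isSymmSndFDerivAt (by simp [minSmoothness_of_isRCLikeNormedField])
  rw [dt_eq_fderiv ((contDiff_dx hw one_add_one_eq_two.le).differentiable_one _),
    dx_eq_fderiv ((contDiff_dt hw one_add_one_eq_two.le).differentiable_one _), uncurry_dx hw₁,
    uncurry_dt hw₁, fderiv_clm_apply (hfd _) (differentiableAt_const _),
    fderiv_clm_apply (hfd _) (differentiableAt_const _)]
  simpa using hsymm (1, 0) (0, 1)

theorem differentiable_dt (hw : ContDiff ℝ 2 (uncurry w)) : Differentiable ℝ (uncurry (dt w)) :=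
  (contDiff_dt hw one_add_one_eq_two.le).differentiable_one

theorem differentiable_dx (hw : ContDiff ℝ 2 (uncurry w)) : Differentiable ℝ (uncurry (dx w)) :=
  (contDiff_dx hw one_add_one_eq_two.le).differentiable_one

theorem continuous_dx_dt (hw : ContDiff ℝ 2 (uncurry w)) : Continuous (uncurry (dx (dt w))) :=
  (contDiff_dx (m := 0) (contDiff_dt hw one_add_one_eq_two.le) (zero_add 1).le).continuous

theorem continuous_dxx (hw : ContDiff ℝ 2 (uncurry w)) : Continuous (uncurry (dxx w)) :=
  (contDiff_dx (m := 0) (contDiff_dx hw one_add_one_eq_two.le) (zero_add 1).le).continuous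

end PartialDerivatives

section CrossEnergy

variable (ρ : ℝ → ℝ) (u v : ℝ → ℝ → ℂ) (c : ℝ)

noncomputable def crossEnergy (τ x : ℝ) : ℂ :=
  (ρ x : ℂ) * dt u τ x * dt v (c - τ) x - dx u τ x * dx v (c - τ) x

noncomputable def crossFlux (τ x : ℝ) : ℂ :=
  dx u τ x * dt v (c - τ) x - dt u τ x * dx v (c - τ) x

noncomputable def crossFluxDeriv (τ x : ℝ) : ℂ :=
  (dxx u τ x * dt v (c - τ) x + dx u τ x * dx (dt v) (c - τ) x)
    - (dx (dt u) τ x * dx v (c - τ) x + dt u τ x * dxx v (c - τ) x)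

variable {u v}

theorem hasDerivAt_crossFlux (hu : ContDiff ℝ 2 (uncurry u)) (hv : ContDiff ℝ 2 (uncurry v))
    (τ x : ℝ) : HasDerivAt (crossFlux u v c τ) (crossFluxDeriv u v c τ x) x :=
  ((hasDerivAt_dx (differentiable_dx hu _)).mul (hasDerivAt_dx (differentiable_dt hv _))).sub
    ((hasDerivAt_dx (differentiable_dt hu _)).mul (hasDerivAt_dx (differentiable_dx hv _)))

theorem hasDerivAt_crossEnergy (σ : ℝ → ℝ) (hu : ContDiff ℝ 2 (uncurry u))
    (hv : ContDiff ℝ 2 (uncurry v)) {τ x : ℝ}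
    (hu_eq : (ρ x : ℂ) * dtt u τ x + (σ x : ℂ) * dt u τ x - dxx u τ x = 0)
    (hv_eq : (ρ x : ℂ) * dtt v (c - τ) x + (σ x : ℂ) * dt v (c - τ) x - dxx v (c - τ) x = 0) :
    HasDerivAt (fun s => crossEnergy ρ u v c s x) (crossFluxDeriv u v c τ x) τ := by
  have hv_dt := (hasDerivAt_dt (differentiable_dt hv (c - τ, x))).comp_const_sub c τ
  have hv_dx := (hasDerivAt_dt (differentiable_dx hv (c - τ, x))).comp_const_sub c τ
  have h := (((hasDerivAt_dt (differentiable_dt hu (τ, x))).const_mul (ρ x : ℂ)).mul hv_dt).sub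
    ((hasDerivAt_dt (differentiable_dx hu (τ, x))).mul hv_dx)
  refine h.congr_deriv ?_
  rw [crossFluxDeriv, dt_dx_comm hu, dt_dx_comm hv, dt_dt, dt_dt]
  linear_combination dt v (c - τ) x * hu_eq - dt u τ x * hv_eq

theorem continuous_crossFluxDeriv (hu : ContDiff ℝ 2 (uncurry u))
    (hv : ContDiff ℝ 2 (uncurry v)) : Continuous (uncurry (crossFluxDeriv u v c)) := by
  have := (differentiable_dt hu).continuous
  have := (differentiable_dt hv).continuous
  have := (differentiable_dx hu).continuous
  have := (differentiable_dx hv).continuous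
  have := continuous_dx_dt hu
  have := continuous_dx_dt hv
  have := continuous_dxx hu
  have := continuous_dxx hv
  unfold crossFluxDeriv
  fun_prop

end CrossEnergy

theorem stmt0_general (a b T : ℝ) (hab : a < b) (hT : 0 < T)
    (ρ σ : ℝ → ℝ)
    (u v : ℝ → ℝ → ℂ)
    (hu : ContDiff ℝ 2 (fun p : ℝ × ℝ => u p.1 p.2))
    (hv : ContDiff ℝ 2 (fun p : ℝ × ℝ => v p.1 p.2))
    (hueq : ∀ t ∈ Set.Icc (0 : ℝ) (2 * T), ∀ x ∈ Set.Icc a b,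
      (ρ x : ℂ) * dtt u t x + (σ x : ℂ) * dt u t x - dxx u t x = 0)
    (hveq : ∀ t ∈ Set.Icc (0 : ℝ) (2 * T), ∀ x ∈ Set.Icc a b,
      (ρ x : ℂ) * dtt v t x + (σ x : ℂ) * dt v t x - dxx v t x = 0)
    (hu0 : ∀ x ∈ Set.Icc a b, u 0 x = 0 ∧ dt u 0 x = 0) :
    ∫ x in a..b, ((ρ x : ℂ) * dt u T x * dt v T x - dx u T x * dx v T x)
      = ∫ τ in (0 : ℝ)..T,
          ((dx u τ b * dt v (2 * T - τ) b - dt u τ b * dx v (2 * T - τ) b)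
            - (dx u τ a * dt v (2 * T - τ) a - dt u τ a * dx v (2 * T - τ) a)) := by
  have hE0 : ∀ x ∈ Icc a b, crossEnergy ρ u v (2 * T) 0 x = 0 := fun x hx => by
    have hdx : dx u 0 x = 0 := deriv_eq_zero_of_eqOn_Icc hab (fun y hy => (hu0 y hy).1) hx
      (hasDerivAt_dx (hu.differentiable two_ne_zero _)).differentiableAt
    simp [crossEnergy, (hu0 x hx).2, hdx]
  have hE : ∀ t ∈ [[0, T]], ∀ x ∈ [[a, b]], HasDerivAt (fun s => crossEnergy ρ u v (2 * T) s x)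
      (crossFluxDeriv u v (2 * T) t x) t := by
    intro t ht x hx
    rw [uIcc_of_le hT.le] at ht
    rw [uIcc_of_le hab.le] at hx
    exact hasDerivAt_crossEnergy ρ (2 * T) σ hu hv (hueq t ⟨ht.1, by linarith [ht.2]⟩ x hx)
      (hveq (2 * T - t) ⟨by linarith [ht.2], by linarith [ht.1]⟩ x hx)
  calc ∫ x in a..b, ((ρ x : ℂ) * dt u T x * dt v T x - dx u T x * dx v T x)
      = ∫ x in a..b, (crossEnergy ρ u v (2 * T) T x - crossEnergy ρ u v (2 * T) 0 x) :=
        integral_congr fun x hx => by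
          rw [uIcc_of_le hab.le] at hx
          rw [hE0 x hx, sub_zero, crossEnergy, two_mul, add_sub_cancel_right]
    _ = _ := integral_sub_eq_integral_sub_of_hasDerivAt hE
        (fun t _ x _ => hasDerivAt_crossFlux (2 * T) hu hv t x)
        (continuous_crossFluxDeriv (2 * T) hu hv).continuousOn

/-- One-dimensional Blagoveščenskiĭ identity for the damped wave equation. -/
theorem stmt0 (a b T : ℝ) (hab : a < b) (hT : 0 < T)
    (ρ σ : ℝ → ℝ)
    (hρ : ContinuousOn ρ (Set.Icc a b)) (hσ : ContinuousOn σ (Set.Icc a b))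
    (hρpos : ∀ x ∈ Set.Icc a b, 0 < ρ x)
    (u v : ℝ → ℝ → ℂ)
    (hu : ContDiff ℝ 2 (fun p : ℝ × ℝ => u p.1 p.2))
    (hv : ContDiff ℝ 2 (fun p : ℝ × ℝ => v p.1 p.2))
    (hueq : ∀ t ∈ Set.Icc (0 : ℝ) (2 * T), ∀ x ∈ Set.Icc a b,
      (ρ x : ℂ) * dtt u t x + (σ x : ℂ) * dt u t x - dxx u t x = 0)
    (hveq : ∀ t ∈ Set.Icc (0 : ℝ) (2 * T), ∀ x ∈ Set.Icc a b,
      (ρ x : ℂ) * dtt v t x + (σ x : ℂ) * dt v t x - dxx v t x = 0)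
    (hu0 : ∀ x ∈ Set.Icc a b, u 0 x = 0 ∧ dt u 0 x = 0)
    (hv0 : ∀ x ∈ Set.Icc a b, v 0 x = 0 ∧ dt v 0 x = 0) :
    ∫ x in a..b, ((ρ x : ℂ) * dt u T x * dt v T x - dx u T x * dx v T x)
      = ∫ τ in (0 : ℝ)..T,
          ((dx u τ b * dt v (2 * T - τ) b - dt u τ b * dx v (2 * T - τ) b)
            - (dx u τ a * dt v (2 * T - τ) a - dt u τ a * dx v (2 * T - τ) a)) :=
  stmt0_general a b T hab hT ρ σ u v hu hv hueq hveq hu0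
end

section
/- Let a<b be real numbers and let ρ,σ:[a,b]→ℝ be continuous. Let U⊆ℝ be an open set and let u,v:ℝ²→ℂ be twice continuously differentiable functions satisfying ρ(x)∂ₜ²u(t,x)+σ(x)∂ₜu(t,x)−∂ₓ²u(t,x)=0 and ρ(x)∂ₜ²v(t,x)+σ(x)∂ₜv(t,x)−∂ₓ²v(t,x)=0 for all t∈U and x∈[a,b]. Define I(t,s)=∫ₐᵇ(ρ(x)·∂ₜu(t,x)·∂ₜv(s,x)−∂ₓu(t,x)·∂ₓv(s,x))dx for t,s∈U. Then I is differentiable in each variable and for all t,s∈U one has ∂ₜI(t,s)−∂ₛI(t,s) = [∂ₓu(t,b)·∂ₜv(s,b)−∂ₜu(t,b)·∂ₓv(s,b)]−[∂ₓu(t,a)·∂ₜv(s,a)−∂ₜu(t,a)·∂ₓv(s,a)]. -/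
/-!
Differentiating under the integral sign, `∂ₜI - ∂ₛI` is the integral of
`ρ (∂ₜ²u ∂ₜv - ∂ₜu ∂ₜ²v) - (∂ₜ∂ₓu ∂ₓv - ∂ₓu ∂ₜ∂ₓv)`. Replacing `ρ ∂ₜ²` by `∂ₓ² - σ ∂ₜ` via the
equation, the damping terms `σ ∂ₜu ∂ₜv` cancel, and by symmetry of the mixed partials what remains
is the exact derivative `∂ₓ (∂ₓu ∂ₜv - ∂ₜu ∂ₓv)`, which integrates to the boundary terms.
-/

open MeasureTheory intervalIntegral

open Set Filter Topology

section PartialDerivatives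

variable {f : ℝ → ℝ → ℂ}

lemma hasDerivAt_dt_eq_fderiv (hf : Differentiable ℝ (fun p : ℝ × ℝ => f p.1 p.2)) (t x : ℝ) :
    HasDerivAt (fun τ => f τ x) (fderiv ℝ (fun p : ℝ × ℝ => f p.1 p.2) (t, x) (1, 0)) t :=
  ((hf (t, x)).hasFDerivAt.comp_hasDerivAt t ((hasDerivAt_id' t).prodMk (hasDerivAt_const t x)) :)

lemma hasDerivAt_dx_eq_fderiv (hf : Differentiable ℝ (fun p : ℝ × ℝ => f p.1 p.2)) (t x : ℝ) :
    HasDerivAt (fun y => f t y) (fderiv ℝ (fun p : ℝ × ℝ => f p.1 p.2) (t, x) (0, 1)) x :=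
  ((hf (t, x)).hasFDerivAt.comp_hasDerivAt x ((hasDerivAt_const x t).prodMk (hasDerivAt_id' x)) :)

lemma dt_eq_fderiv_s1 (hf : Differentiable ℝ (fun p : ℝ × ℝ => f p.1 p.2)) (t x : ℝ) :
    dt f t x = fderiv ℝ (fun p : ℝ × ℝ => f p.1 p.2) (t, x) (1, 0) :=
  (hasDerivAt_dt_eq_fderiv hf t x).deriv

lemma dx_eq_fderiv_s1 (hf : Differentiable ℝ (fun p : ℝ × ℝ => f p.1 p.2)) (t x : ℝ) :
    dx f t x = fderiv ℝ (fun p : ℝ × ℝ => f p.1 p.2) (t, x) (0, 1) :=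
  (hasDerivAt_dx_eq_fderiv hf t x).deriv

lemma hasDerivAt_dt_s1 (hf : Differentiable ℝ (fun p : ℝ × ℝ => f p.1 p.2)) (t x : ℝ) :
    HasDerivAt (fun τ => f τ x) (dt f t x) t :=
  dt_eq_fderiv_s1 hf t x ▸ hasDerivAt_dt_eq_fderiv hf t x

lemma hasDerivAt_dx_s1 (hf : Differentiable ℝ (fun p : ℝ × ℝ => f p.1 p.2)) (t x : ℝ) :
    HasDerivAt (fun y => f t y) (dx f t x) x :=
  dx_eq_fderiv_s1 hf t x ▸ hasDerivAt_dx_eq_fderiv hf t x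

variable {m n : WithTop ℕ∞}

lemma contDiff_dt_s1 (hf : ContDiff ℝ n (fun p : ℝ × ℝ => f p.1 p.2)) (hmn : m + 1 ≤ n) :
    ContDiff ℝ m (fun p : ℝ × ℝ => dt f p.1 p.2) := by
  have hdiff := hf.differentiable (ne_bot_of_le_ne_bot one_ne_zero (le_add_self.trans hmn))
  simp only [dt_eq_fderiv_s1 hdiff]
  exact (hf.fderiv_right hmn).clm_apply contDiff_const

lemma contDiff_dx_s1 (hf : ContDiff ℝ n (fun p : ℝ × ℝ => f p.1 p.2)) (hmn : m + 1 ≤ n) :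
    ContDiff ℝ m (fun p : ℝ × ℝ => dx f p.1 p.2) := by
  have hdiff := hf.differentiable (ne_bot_of_le_ne_bot one_ne_zero (le_add_self.trans hmn))
  simp only [dx_eq_fderiv_s1 hdiff]
  exact (hf.fderiv_right hmn).clm_apply contDiff_const

lemma continuous_dt (hf : ContDiff ℝ 1 (fun p : ℝ × ℝ => f p.1 p.2)) :
    Continuous (fun p : ℝ × ℝ => dt f p.1 p.2) :=
  (contDiff_dt_s1 hf (m := 0) (by norm_num)).continuous

lemma continuous_dx (hf : ContDiff ℝ 1 (fun p : ℝ × ℝ => f p.1 p.2)) :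
    Continuous (fun p : ℝ × ℝ => dx f p.1 p.2) :=
  (contDiff_dx_s1 hf (m := 0) (by norm_num)).continuous

lemma dt_dx_eq_dx_dt (hf : ContDiff ℝ 2 (fun p : ℝ × ℝ => f p.1 p.2)) (t x : ℝ) :
    dt (dx f) t x = dx (dt f) t x := by
  have hdiff := hf.differentiable two_ne_zero
  have hfderiv : Differentiable ℝ (fderiv ℝ (fun p : ℝ × ℝ => f p.1 p.2)) :=
    (hf.fderiv_right (m := 1) (by norm_num)).differentiable one_ne_zero
  rw [dt_eq_fderiv_s1 ((contDiff_dx_s1 hf (m := 1) (by norm_num)).differentiable one_ne_zero),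
    dx_eq_fderiv_s1 ((contDiff_dt_s1 hf (m := 1) (by norm_num)).differentiable one_ne_zero)]
  simp only [dx_eq_fderiv_s1 hdiff, dt_eq_fderiv_s1 hdiff]
  rw [fderiv_clm_apply (hfderiv _) (differentiableAt_const _),
    fderiv_clm_apply (hfderiv _) (differentiableAt_const _)]
  simpa using (hf.contDiffAt.isSymmSndFDerivAt (by simp)).eq (1, 0) (0, 1)

end PartialDerivatives

lemma hasDerivAt_intervalIntegral_of_continuousOn {E : Type*} [NormedAddCommGroup E]
    [NormedSpace ℝ E] {G G' : ℝ → ℝ → E} {a b : ℝ}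
    (hG : ContinuousOn (fun p : ℝ × ℝ => G p.1 p.2) (univ ×ˢ uIcc a b))
    (hG' : ContinuousOn (fun p : ℝ × ℝ => G' p.1 p.2) (univ ×ˢ uIcc a b))
    (hderiv : ∀ τ, ∀ x ∈ uIcc a b, HasDerivAt (fun τ => G τ x) (G' τ x) τ) (t : ℝ) :
    HasDerivAt (fun τ => ∫ x in a..b, G τ x) (∫ x in a..b, G' t x) t := by
  have slice {H : ℝ → ℝ → E} (hH : ContinuousOn (fun p : ℝ × ℝ => H p.1 p.2) (univ ×ˢ uIcc a b))
      (τ : ℝ) : ContinuousOn (H τ) (uIcc a b) :=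
    hH.comp (continuous_const.prodMk continuous_id).continuousOn fun _ hx => ⟨trivial, hx⟩
  obtain ⟨M, hM⟩ := (isCompact_Icc.prod isCompact_uIcc).exists_bound_of_continuousOn
    (hG'.mono (prod_mono (subset_univ (Icc (t - 1) (t + 1))) subset_rfl))
  exact (hasDerivAt_integral_of_dominated_loc_of_deriv_le (bound := fun _ => M)
    (Icc_mem_nhds (by linarith) (by linarith))
    (Eventually.of_forall fun τ =>
      ((slice hG τ).mono uIoc_subset_uIcc).aestronglyMeasurable measurableSet_uIoc)
    ((slice hG t).intervalIntegrable)
    (((slice hG' t).mono uIoc_subset_uIcc).aestronglyMeasurable measurableSet_uIoc)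
    (ae_of_all _ fun x hx τ hτ => hM (τ, x) ⟨hτ, uIoc_subset_uIcc hx⟩)
    intervalIntegrable_const
    (ae_of_all _ fun x hx τ _ => hderiv τ x (uIoc_subset_uIcc hx))).2

/-- The paper's `I(t, s)`, with `c = ρ`. -/
noncomputable def wavePairing (a b : ℝ) (c : ℝ → ℂ) (f g : ℝ → ℝ → ℂ) (t s : ℝ) : ℂ :=
  ∫ x in a..b, (c x * dt f t x * dt g s x - dx f t x * dx g s x)

section WavePairing

variable {a b : ℝ} {c : ℝ → ℂ} {f g : ℝ → ℝ → ℂ}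

lemma wavePairing_comm (t s : ℝ) : wavePairing a b c f g t s = wavePairing a b c g f s t :=
  integral_congr fun _ _ => by ring

lemma hasDerivAt_wavePairing_left (hc : ContinuousOn c (uIcc a b))
    (hf : ContDiff ℝ 2 (fun p : ℝ × ℝ => f p.1 p.2))
    (hg : ContDiff ℝ 1 (fun p : ℝ × ℝ => g p.1 p.2)) (t s : ℝ) :
    HasDerivAt (fun τ => wavePairing a b c f g τ s)
      (∫ x in a..b, (c x * dtt f t x * dt g s x - dt (dx f) t x * dx g s x)) t := by
  have hdtf := contDiff_dt_s1 hf (m := 1) (by norm_num)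
  have hdxf := contDiff_dx_s1 hf (m := 1) (by norm_num)
  have := hdtf.continuous
  have := hdxf.continuous
  have := continuous_dt hg
  have := continuous_dx hg
  have : Continuous fun p : ℝ × ℝ => dtt f p.1 p.2 := continuous_dt hdtf
  have := continuous_dt hdxf
  refine hasDerivAt_intervalIntegral_of_continuousOn
    (G := fun τ x => c x * dt f τ x * dt g s x - dx f τ x * dx g s x)
    (G' := fun τ x => c x * dtt f τ x * dt g s x - dt (dx f) τ x * dx g s x) ?_ ?_ ?_ t
  · fun_prop (disch := exact mapsTo_snd_prod)
  · fun_prop (disch := exact mapsTo_snd_prod)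
  · intro τ x _
    exact (((hasDerivAt_dt_s1 (hdtf.differentiable one_ne_zero) τ x).const_mul (c x)).mul_const _).sub
      ((hasDerivAt_dt_s1 (hdxf.differentiable one_ne_zero) τ x).mul_const _)

lemma hasDerivAt_wavePairing_right (hc : ContinuousOn c (uIcc a b))
    (hf : ContDiff ℝ 1 (fun p : ℝ × ℝ => f p.1 p.2))
    (hg : ContDiff ℝ 2 (fun p : ℝ × ℝ => g p.1 p.2)) (t s : ℝ) :
    HasDerivAt (fun τ => wavePairing a b c f g t τ)
      (∫ x in a..b, (c x * dt f t x * dtt g s x - dx f t x * dt (dx g) s x)) s := by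
  simp only [wavePairing_comm t]
  convert hasDerivAt_wavePairing_left hc hg hf s t using 1
  exact integral_congr fun _ _ => by ring

end WavePairing

lemma integral_dx_flux {f g : ℝ → ℝ → ℂ} (hf : ContDiff ℝ 2 (fun p : ℝ × ℝ => f p.1 p.2))
    (hg : ContDiff ℝ 2 (fun p : ℝ × ℝ => g p.1 p.2)) (a b t s : ℝ) :
    ∫ x in a..b, (dxx f t x * dt g s x + dx f t x * dx (dt g) s x
        - (dx (dt f) t x * dx g s x + dt f t x * dxx g s x))
      = (dx f t b * dt g s b - dt f t b * dx g s b)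
        - (dx f t a * dt g s a - dt f t a * dx g s a) := by
  have hdtf := contDiff_dt_s1 hf (m := 1) (by norm_num)
  have hdxf := contDiff_dx_s1 hf (m := 1) (by norm_num)
  have hdtg := contDiff_dt_s1 hg (m := 1) (by norm_num)
  have hdxg := contDiff_dx_s1 hg (m := 1) (by norm_num)
  have : Continuous fun p : ℝ × ℝ => dxx f p.1 p.2 := continuous_dx hdxf
  have : Continuous fun p : ℝ × ℝ => dxx g p.1 p.2 := continuous_dx hdxg
  have := continuous_dx hdtf
  have := continuous_dx hdtg
  have := hdtf.continuous
  have := hdxf.continuous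
  have := hdtg.continuous
  have := hdxg.continuous
  refine integral_eq_sub_of_hasDerivAt
    (f := fun y => dx f t y * dt g s y - dt f t y * dx g s y) (fun y _ => ?_) ?_
  · exact ((hasDerivAt_dx_s1 (hdxf.differentiable one_ne_zero) t y).mul
        (hasDerivAt_dx_s1 (hdtg.differentiable one_ne_zero) s y)).sub
      ((hasDerivAt_dx_s1 (hdtf.differentiable one_ne_zero) t y).mul
        (hasDerivAt_dx_s1 (hdxg.differentiable one_ne_zero) s y))
  · apply Continuous.intervalIntegrable
    fun_prop

lemma integral_sub_integral_eq_boundary_of_dampedWave {ρ σ : ℝ → ℝ} {u v : ℝ → ℝ → ℂ}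
    {a b t s : ℝ} (hρ : ContinuousOn ρ (uIcc a b))
    (hu : ContDiff ℝ 2 (fun p : ℝ × ℝ => u p.1 p.2))
    (hv : ContDiff ℝ 2 (fun p : ℝ × ℝ => v p.1 p.2))
    (hut : ∀ x ∈ uIcc a b, (ρ x : ℂ) * dtt u t x + (σ x : ℂ) * dt u t x - dxx u t x = 0)
    (hvs : ∀ x ∈ uIcc a b, (ρ x : ℂ) * dtt v s x + (σ x : ℂ) * dt v s x - dxx v s x = 0) :
    (∫ x in a..b, ((ρ x : ℂ) * dtt u t x * dt v s x - dt (dx u) t x * dx v s x))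
        - ∫ x in a..b, ((ρ x : ℂ) * dt u t x * dtt v s x - dx u t x * dt (dx v) s x)
      = (dx u t b * dt v s b - dt u t b * dx v s b)
        - (dx u t a * dt v s a - dt u t a * dx v s a) := by
  have hρ' : ContinuousOn (fun x => (ρ x : ℂ)) (uIcc a b) :=
    Complex.continuous_ofReal.comp_continuousOn hρ
  have hdtu := contDiff_dt_s1 hu (m := 1) (by norm_num)
  have hdxu := contDiff_dx_s1 hu (m := 1) (by norm_num)
  have hdtv := contDiff_dt_s1 hv (m := 1) (by norm_num)
  have hdxv := contDiff_dx_s1 hv (m := 1) (by norm_num)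
  have : Continuous fun p : ℝ × ℝ => dtt u p.1 p.2 := continuous_dt hdtu
  have : Continuous fun p : ℝ × ℝ => dtt v p.1 p.2 := continuous_dt hdtv
  have := continuous_dt hdxu
  have := continuous_dt hdxv
  have := hdtu.continuous
  have := hdxu.continuous
  have := hdtv.continuous
  have := hdxv.continuous
  rw [← integral_sub (ContinuousOn.intervalIntegrable (by fun_prop))
    (ContinuousOn.intervalIntegrable (by fun_prop)), ← integral_dx_flux hu hv]
  refine integral_congr fun x hx => ?_
  linear_combination dt v s x * hut x hx - dt u t x * hvs x hx
    - dx v s x * dt_dx_eq_dx_dt hu t x + dx u t x * dt_dx_eq_dx_dt hv s x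

theorem stmt1_general (a b : ℝ) (hab : a < b)
    (ρ σ : ℝ → ℝ)
    (hρ : ContinuousOn ρ (Set.Icc a b))
    (U : Set ℝ) (hU : IsOpen U)
    (u v : ℝ → ℝ → ℂ)
    (hu : ContDiff ℝ 2 (fun p : ℝ × ℝ => u p.1 p.2))
    (hv : ContDiff ℝ 2 (fun p : ℝ × ℝ => v p.1 p.2))
    (hueq : ∀ t ∈ U, ∀ x ∈ Set.Icc a b,
      (ρ x : ℂ) * dtt u t x + (σ x : ℂ) * dt u t x - dxx u t x = 0)
    (hveq : ∀ t ∈ U, ∀ x ∈ Set.Icc a b,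
      (ρ x : ℂ) * dtt v t x + (σ x : ℂ) * dt v t x - dxx v t x = 0)
    (I : ℝ → ℝ → ℂ)
    (hI : ∀ t ∈ U, ∀ s ∈ U,
      I t s = ∫ x in a..b, ((ρ x : ℂ) * dt u t x * dt v s x - dx u t x * dx v s x)) :
    ∀ t ∈ U, ∀ s ∈ U,
      DifferentiableAt ℝ (fun τ => I τ s) t ∧
      DifferentiableAt ℝ (fun τ => I t τ) s ∧
      deriv (fun τ => I τ s) t - deriv (fun τ => I t τ) s
        = (dx u t b * dt v s b - dt u t b * dx v s b)
          - (dx u t a * dt v s a - dt u t a * dx v s a) := by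
  rw [← uIcc_of_le hab.le] at hρ hueq hveq
  intro t ht s hs
  have hρ' : ContinuousOn (fun x => (ρ x : ℂ)) (uIcc a b) :=
    Complex.continuous_ofReal.comp_continuousOn hρ
  have hIt : (fun τ => I τ s) =ᶠ[𝓝 t] fun τ => wavePairing a b (fun x => ρ x) u v τ s :=
    eventually_of_mem (hU.mem_nhds ht) fun τ hτ => hI τ hτ s hs
  have hIs : (fun τ => I t τ) =ᶠ[𝓝 s] fun τ => wavePairing a b (fun x => ρ x) u v t τ :=
    eventually_of_mem (hU.mem_nhds hs) fun τ hτ => hI t ht τ hτ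
  have hderiv_t :=
    (hasDerivAt_wavePairing_left hρ' hu (hv.of_le one_le_two) t s).congr_of_eventuallyEq hIt
  have hderiv_s :=
    (hasDerivAt_wavePairing_right hρ' (hu.of_le one_le_two) hv t s).congr_of_eventuallyEq hIs
  refine ⟨hderiv_t.differentiableAt, hderiv_s.differentiableAt, ?_⟩
  rw [hderiv_t.deriv, hderiv_s.deriv]
  exact integral_sub_integral_eq_boundary_of_dampedWave hρ hu hv (hueq t ht) (hveq s hs)

/-- The t- and s-derivatives of the wave inner product `I(t,s)` differ only by
boundary terms: the damping terms cancel. -/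
theorem stmt1 (a b : ℝ) (hab : a < b)
    (ρ σ : ℝ → ℝ)
    (hρ : ContinuousOn ρ (Set.Icc a b)) (hσ : ContinuousOn σ (Set.Icc a b))
    (U : Set ℝ) (hU : IsOpen U)
    (u v : ℝ → ℝ → ℂ)
    (hu : ContDiff ℝ 2 (fun p : ℝ × ℝ => u p.1 p.2))
    (hv : ContDiff ℝ 2 (fun p : ℝ × ℝ => v p.1 p.2))
    (hueq : ∀ t ∈ U, ∀ x ∈ Set.Icc a b,
      (ρ x : ℂ) * dtt u t x + (σ x : ℂ) * dt u t x - dxx u t x = 0)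
    (hveq : ∀ t ∈ U, ∀ x ∈ Set.Icc a b,
      (ρ x : ℂ) * dtt v t x + (σ x : ℂ) * dt v t x - dxx v t x = 0)
    (I : ℝ → ℝ → ℂ)
    (hI : ∀ t ∈ U, ∀ s ∈ U,
      I t s = ∫ x in a..b, ((ρ x : ℂ) * dt u t x * dt v s x - dx u t x * dx v s x)) :
    ∀ t ∈ U, ∀ s ∈ U,
      DifferentiableAt ℝ (fun τ => I τ s) t ∧
      DifferentiableAt ℝ (fun τ => I t τ) s ∧
      deriv (fun τ => I τ s) t - deriv (fun τ => I t τ) s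
        = (dx u t b * dt v s b - dt u t b * dx v s b)
          - (dx u t a * dt v s a - dt u t a * dx v s a) :=
  stmt1_general a b hab ρ σ hρ U hU u v hu hv hueq hveq I hI
end

section
/- Let a<b be real numbers and let T ≥ b−a+2. Let φ:ℝ→ℂ be continuously differentiable and ψ:ℝ→ℂ be continuous, with both φ and ψ vanishing outside the interval [a−1,b+1], and set c = (1/2)∫_{−∞}^{∞} ψ(ξ)dξ. Define w:ℝ²→ℂ by w(t,x) = (1/2)[φ(x+T−t)+φ(x−T+t)] − (1/2)∫_{x−T+t}^{x+T−t} ψ(ξ)dξ + c. Then for every x∈[a,b]: w(0,x)=0 and ∂ₜw(0,x)=0, where ∂ₜw(0,x) = (1/2)[−φ′(x+T)+φ′(x−T)] + (1/2)[ψ(x+T)+ψ(x−T)]. -/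
open MeasureTheory intervalIntegral

/-!
For `x ∈ [a, b]` and `|t| < 1`, the two characteristics `x ± (T - t)` through `(t, x)` leave
`[a - 1, b + 1]` because `T ≥ b - a + 2`. There both `φ` terms vanish and the integral of `ψ`
over `[x - T + t, x + T - t]` is its full integral, which the constant `c` cancels. Hence `w`
vanishes on a neighbourhood of `t = 0`, and with it `w(0, x)` and `∂ₜ w(0, x)`.
-/

lemma dAlembert_add_half_integral_eq_zero {p q l r : ℝ} {φ ψ : ℝ → ℂ}
    (hφ : ∀ y, y ∉ Set.Icc p q → φ y = 0) (hψ : ∀ y, y ∉ Set.Icc p q → ψ y = 0)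
    (hl : l < p) (hr : q < r) :
    (φ r + φ l) / 2 - (1 / 2 : ℂ) * (∫ ξ in l..r, ψ ξ) + (1 / 2 : ℂ) * ∫ ξ, ψ ξ = 0 := by
  have hφr : φ r = 0 := hφ r fun h => (h.2.trans_lt hr).false
  have hφl : φ l = 0 := hφ l fun h => (hl.trans_le h.1).false
  have hsupp : Function.support ψ ⊆ Set.Ioc l r := fun y hy =>
    have hy' : y ∈ Set.Icc p q := by_contra fun h => hy (hψ y h)
    ⟨hl.trans_le hy'.1, hy'.2.trans hr.le⟩
  rw [hφr, hφl, integral_eq_integral_of_support_subset hsupp]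
  ring

theorem stmt15_general (a b T : ℝ) (hT : b - a + 2 ≤ T)
    (φ ψ : ℝ → ℂ)
    (hφsupp : ∀ y : ℝ, y ∉ Set.Icc (a - 1) (b + 1) → φ y = 0)
    (hψsupp : ∀ y : ℝ, y ∉ Set.Icc (a - 1) (b + 1) → ψ y = 0)
    (c : ℂ) (hc : c = (1 / 2 : ℂ) * ∫ ξ : ℝ, ψ ξ)
    (w : ℝ → ℝ → ℂ)
    (hw : ∀ t x : ℝ, w t x
      = (φ (x + T - t) + φ (x - T + t)) / 2
        - (1 / 2 : ℂ) * (∫ ξ in (x - T + t)..(x + T - t), ψ ξ) + c) :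
    ∀ x ∈ Set.Icc a b, w 0 x = 0 ∧ deriv (fun t => w t x) 0 = 0 := by
  rintro x ⟨hax, hxb⟩
  have hvanish : ∀ t ∈ Metric.ball (0 : ℝ) 1, w t x = 0 := by
    intro t ht
    obtain ⟨ht₁, ht₂⟩ := abs_lt.mp (by simpa [Real.dist_eq] using ht)
    rw [hw, hc]
    exact dAlembert_add_half_integral_eq_zero hφsupp hψsupp (by linarith) (by linarith)
  have hev : (fun t => w t x) =ᶠ[nhds 0] fun _ => 0 :=
    Filter.eventually_of_mem (Metric.ball_mem_nhds 0 one_pos) hvanish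
  exact ⟨hvanish 0 (Metric.mem_ball_self one_pos), by rw [hev.deriv_eq, deriv_const]⟩

/-- The time-reversed d'Alembert wave built from compactly supported data, with
the particular constant `c = (1/2)∫ψ`, has vanishing Cauchy data at time `t = 0`
on `[a,b]` when the final time `T ≥ b − a + 2`. -/
theorem stmt15 (a b T : ℝ) (hab : a < b) (hT : b - a + 2 ≤ T)
    (φ ψ : ℝ → ℂ) (hφ : ContDiff ℝ 1 φ) (hψ : Continuous ψ)
    (hφsupp : ∀ y : ℝ, y ∉ Set.Icc (a - 1) (b + 1) → φ y = 0)
    (hψsupp : ∀ y : ℝ, y ∉ Set.Icc (a - 1) (b + 1) → ψ y = 0)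
    (c : ℂ) (hc : c = (1 / 2 : ℂ) * ∫ ξ : ℝ, ψ ξ)
    (w : ℝ → ℝ → ℂ)
    (hw : ∀ t x : ℝ, w t x
      = (φ (x + T - t) + φ (x - T + t)) / 2
        - (1 / 2 : ℂ) * (∫ ξ in (x - T + t)..(x + T - t), ψ ξ) + c) :
    ∀ x ∈ Set.Icc a b, w 0 x = 0 ∧ deriv (fun t => w t x) 0 = 0 :=
  stmt15_general a b T hT φ ψ hφsupp hψsupp c hc w hw
end
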